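/- arXiv:2106.06290 — 6 statements merged into one kernel-verified Lean document; each statement's English description precedes it below -/
import Mathlib

section
/- Sufficient condition for minimality in Sobolev L¹ norm: let P_n be a monic polynomial of degree n such that Σ_{k=0}^m ∫ q^{(k)}(x) · sgn(P_n^{(k)}(x)) dμ_k(x) = 0 for every polynomial q of degree at most n−1. Then for every monic polynomial Q of degree n, Σ_{k=0}^m ∫ |P_n^{(k)}| dμ_k ≤ Σ_{k=0}^m ∫ |Q^{(k)}| dμ_k. -/
/-!
Let `sₖ = sgn P⁽ᵏ⁾`. Then `‖P‖ = ∑ₖ ∫ P⁽ᵏ⁾ sₖ dμₖ`, and since `P - Q` has degree `< n` when both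
are monic of degree `n`, the orthogonality hypothesis turns this into `∑ₖ ∫ Q⁽ᵏ⁾ sₖ dμₖ`, which is
at most `‖Q‖` because `|sₖ| ≤ 1`.
-/

open Polynomial MeasureTheory

namespace Real

theorem measurable_sign : Measurable Real.sign :=
  Measurable.ite (measurableSet_lt measurable_id measurable_const) measurable_const
    (Measurable.ite (measurableSet_lt measurable_const measurable_id) measurable_const
      measurable_const)

theorem mul_sign_self (x : ℝ) : x * sign x = |x| := by
  rcases lt_trichotomy x 0 with h | rfl | h
  · rw [sign_of_neg h, abs_of_neg h, mul_neg_one]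
  · simp
  · rw [sign_of_pos h, abs_of_pos h, mul_one]

theorem abs_sign_le_one (x : ℝ) : |sign x| ≤ 1 := by
  rcases sign_apply_eq x with h | h | h <;> simp [h]

end Real

namespace Polynomial

theorem Monic.degree_sub_lt {R : Type*} [Ring R] [Nontrivial R] {p q : R[X]} (hp : p.Monic)
    (hq : q.Monic) (h : p.natDegree = q.natDegree) : (p - q).degree < p.natDegree := by
  rw [← degree_eq_natDegree hp.ne_zero]
  refine degree_sub_lt_left ?_ hp.ne_zero (by rw [hp.leadingCoeff, hq.leadingCoeff])
  rw [degree_eq_natDegree hp.ne_zero, degree_eq_natDegree hq.ne_zero, h]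

end Polynomial

namespace MeasureTheory

variable {α : Type*} [MeasurableSpace α]

section

variable {μ : Measure α} {f g : α → ℝ}

theorem Integrable.mul_sign (hf : Integrable f μ) (hg : AEMeasurable g μ) :
    Integrable (fun x => f x * Real.sign (g x)) μ :=
  hf.mul_bdd (Real.measurable_sign.comp_aemeasurable hg).aestronglyMeasurable
    (ae_of_all _ fun x => Real.abs_sign_le_one (g x))

theorem integral_mul_sign_le_integral_abs (hf : Integrable f μ) (hg : AEMeasurable g μ) :
    ∫ x, f x * Real.sign (g x) ∂μ ≤ ∫ x, |f x| ∂μ :=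
  integral_mono (hf.mul_sign hg) hf.abs fun x => calc
    f x * Real.sign (g x) ≤ |f x * Real.sign (g x)| := le_abs_self _
    _ = |f x| * |Real.sign (g x)| := abs_mul _ _
    _ ≤ |f x| := mul_le_of_le_one_right (abs_nonneg _) (Real.abs_sign_le_one _)

theorem integral_mul_sign_self : ∫ x, f x * Real.sign (f x) ∂μ = ∫ x, |f x| ∂μ := by
  simp only [Real.mul_sign_self]

end

theorem sum_integral_abs_le_of_sum_integral_sub_mul_sign_eq_zero {ι : Type*} (s : Finset ι)
    (μ : ι → Measure α) {f g : ι → α → ℝ} (hf : ∀ i ∈ s, Integrable (f i) (μ i))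
    (hg : ∀ i ∈ s, Integrable (g i) (μ i))
    (h : ∑ i ∈ s, ∫ x, (f i x - g i x) * Real.sign (f i x) ∂μ i = 0) :
    ∑ i ∈ s, ∫ x, |f i x| ∂μ i ≤ ∑ i ∈ s, ∫ x, |g i x| ∂μ i := by
  have hpair : ∑ i ∈ s, ∫ x, f i x * Real.sign (f i x) ∂μ i =
      ∑ i ∈ s, ∫ x, g i x * Real.sign (f i x) ∂μ i := by
    rw [← sub_eq_zero, ← Finset.sum_sub_distrib, ← h]
    refine Finset.sum_congr rfl fun i hi => ?_
    rw [← integral_sub ((hf i hi).mul_sign (hf i hi).aemeasurable)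
      ((hg i hi).mul_sign (hf i hi).aemeasurable)]
    simp only [sub_mul]
  calc ∑ i ∈ s, ∫ x, |f i x| ∂μ i
      = ∑ i ∈ s, ∫ x, g i x * Real.sign (f i x) ∂μ i := by
        simp only [← hpair, integral_mul_sign_self]
    _ ≤ ∑ i ∈ s, ∫ x, |g i x| ∂μ i := Finset.sum_le_sum fun i hi =>
        integral_mul_sign_le_integral_abs (hg i hi) (hf i hi).aemeasurable

end MeasureTheory

theorem sobolev_L1_sufficient_condition_general
    (m n : ℕ) (μ : Fin (m + 1) → Measure ℝ)
    (hint : ∀ (k : Fin (m + 1)) (q : Polynomial ℝ),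
      Integrable (fun x => q.eval x) (μ k))
    (P : Polynomial ℝ) (hPm : P.Monic) (hPd : P.natDegree = n)
    (horth : ∀ q : Polynomial ℝ, q.degree < n →
      ∑ k : Fin (m + 1),
        ∫ x : ℝ, (derivative^[(k : ℕ)] q).eval x *
          Real.sign ((derivative^[(k : ℕ)] P).eval x) ∂ μ k = 0) :
    ∀ Q : Polynomial ℝ, Q.Monic → Q.natDegree = n →
      ∑ k : Fin (m + 1), ∫ x : ℝ, |(derivative^[(k : ℕ)] P).eval x| ∂ μ k ≤
      ∑ k : Fin (m + 1), ∫ x : ℝ, |(derivative^[(k : ℕ)] Q).eval x| ∂ μ k := by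
  intro Q hQm hQd
  have hdeg : (P - Q).degree < n := hPd ▸ hPm.degree_sub_lt hQm (hPd.trans hQd.symm)
  refine sum_integral_abs_le_of_sum_integral_sub_mul_sign_eq_zero _ μ
    (fun k _ => hint k _) (fun k _ => hint k _) ?_
  simpa only [iterate_derivative_sub, eval_sub] using horth (P - Q) hdeg

/-- Sufficient condition for minimality in the Sobolev `L¹` norm: if
`∑ₖ ∫ q⁽ᵏ⁾ sgn(Pₙ⁽ᵏ⁾) dμₖ = 0` for all `q` of degree at most `n-1`, then `Pₙ`
minimizes the Sobolev `1`-norm among monic polynomials of degree `n`. -/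
theorem sobolev_L1_sufficient_condition
    (m n : ℕ) (μ : Fin (m + 1) → Measure ℝ)
    (hfin : ∀ k, IsFiniteMeasure (μ k))
    (hint : ∀ (k : Fin (m + 1)) (q : Polynomial ℝ),
      Integrable (fun x => q.eval x) (μ k))
    (P : Polynomial ℝ) (hPm : P.Monic) (hPd : P.natDegree = n)
    (horth : ∀ q : Polynomial ℝ, q.degree < n →
      ∑ k : Fin (m + 1),
        ∫ x : ℝ, (derivative^[(k : ℕ)] q).eval x *
          Real.sign ((derivative^[(k : ℕ)] P).eval x) ∂ μ k = 0) :
    ∀ Q : Polynomial ℝ, Q.Monic → Q.natDegree = n →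
      ∑ k : Fin (m + 1), ∫ x : ℝ, |(derivative^[(k : ℕ)] P).eval x| ∂ μ k ≤
      ∑ k : Fin (m + 1), ∫ x : ℝ, |(derivative^[(k : ℕ)] Q).eval x| ∂ μ k :=
  sobolev_L1_sufficient_condition_general m n μ hint P hPm hPd horth
end

section
/- For every a ∈ [0,1], the monic quadratic polynomial P_a(x) = (x+1)(x−a) satisfies both orthogonality conditions: ∫_{−2}^0 sgn((x+1)(x−a)) dx = 0 and ∫_{−2}^0 x·sgn((x+1)(x−a)) dx + ∫_0^1 sgn(2x+1−a) dx = 0. Consequently, all polynomials P_a for a ∈ [0,1] are minimal of degree 2 with respect to the Sobolev norm ‖f‖ = ∫_{−2}^0 |f| dx + ∫_0^1 |f'| dx, so the minimal polynomial for this norm is not unique. -/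
/-!
Let `σ = 1` on `(-2,-1)` and `σ = -1` on `(-1,0)`. The functional
`signPairing f = ∫_{-2}^0 σ f + ∫_0^1 f'` satisfies `signPairing f ≤ ‖f‖` for every `f`, and it
vanishes on `1` and `x` (these are the two orthogonality conditions), so it equals
`signPairing x² = 3` on every monic quadratic. For `a ∈ [0,1]` the polynomial
`P_a = (x+1)(x-a)` has sign `σ` on `[-2,0]` and `P_a' = 2x+1-a ≥ 0` on `[0,1]`, so
`‖P_a‖ = signPairing P_a = 3 ≤ ‖Q‖` for every monic quadratic `Q`.
-/

open Polynomial MeasureTheory intervalIntegral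

/-- The Sobolev 1-norm `‖f‖ = ∫_{-2}^0 |f| dx + ∫_0^1 |f'| dx`. -/
noncomputable def sobNorm5 (f : Polynomial ℝ) : ℝ :=
  (∫ x in (-2 : ℝ)..0, |f.eval x|) + ∫ x in (0 : ℝ)..1, |(derivative f).eval x|

open Set

lemma integral_eq_add_of_eqOn_Ioo {f g h : ℝ → ℝ} {a b c : ℝ} (hab : a ≤ b) (hbc : b ≤ c)
    (hg : Continuous g) (hh : Continuous h) (hfg : EqOn f g (Ioo a b))
    (hfh : EqOn f h (Ioo b c)) :
    ∫ x in a..c, f x = (∫ x in a..b, g x) + ∫ x in b..c, h x := by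
  have hf₁ : IntervalIntegrable f volume a b :=
    (intervalIntegrable_congr_uIoo (uIoo_of_le hab ▸ hfg)).mpr (hg.intervalIntegrable a b)
  have hf₂ : IntervalIntegrable f volume b c :=
    (intervalIntegrable_congr_uIoo (uIoo_of_le hbc ▸ hfh)).mpr (hh.intervalIntegrable b c)
  rw [← integral_add_adjacent_intervals hf₁ hf₂, integral_congr_Ioo_of_le hab hfg,
    integral_congr_Ioo_of_le hbc hfh]

lemma integral_quadratic (b c s t : ℝ) :
    ∫ x in s..t, (x ^ 2 + b * x + c) =
      (t ^ 3 - s ^ 3) / 3 + b * (t ^ 2 - s ^ 2) / 2 + c * (t - s) := by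
  have hsq : IntervalIntegrable (fun x : ℝ => x ^ 2) volume s t :=
    (continuous_pow 2).intervalIntegrable s t
  have hlin : IntervalIntegrable (fun x : ℝ => b * x) volume s t :=
    (continuous_const.mul continuous_id).intervalIntegrable s t
  rw [integral_add (hsq.add hlin) intervalIntegrable_const, integral_add hsq hlin,
    integral_pow, intervalIntegral.integral_const_mul, integral_id, intervalIntegral.integral_const,
    smul_eq_mul]
  norm_num
  ring

lemma Polynomial.integral_eval_derivative (f : ℝ[X]) (s t : ℝ) :
    ∫ x in s..t, (derivative f).eval x = f.eval t - f.eval s :=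
  integral_eq_sub_of_hasDerivAt (fun x _ => f.hasDerivAt x)
    (f.derivative.continuous.intervalIntegrable s t)

lemma Polynomial.Monic.eq_X_sq_add_C_mul_X_add_C {R : Type*} [Semiring R] {Q : R[X]}
    (hm : Q.Monic) (hd : Q.natDegree = 2) :
    Q = X ^ 2 + C (Q.coeff 1) * X + C (Q.coeff 0) := by
  conv_lhs => rw [hm.as_sum, hd]
  simp only [Finset.sum_range_succ, Finset.sum_range_zero, pow_zero, pow_one, mul_one, zero_add]
  abel

noncomputable def signPairing (f : ℝ[X]) : ℝ :=
  (∫ x in (-2 : ℝ)..(-1), f.eval x) - (∫ x in (-1 : ℝ)..0, f.eval x) +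
    ∫ x in (0 : ℝ)..1, (derivative f).eval x

lemma sobNorm5_eq_split (f : ℝ[X]) :
    sobNorm5 f = (∫ x in (-2 : ℝ)..(-1), |f.eval x|) + (∫ x in (-1 : ℝ)..0, |f.eval x|) +
      ∫ x in (0 : ℝ)..1, |(derivative f).eval x| := by
  have hcont : Continuous fun x => |f.eval x| := f.continuous.abs
  rw [sobNorm5, integral_add_adjacent_intervals (hcont.intervalIntegrable _ _)
    (hcont.intervalIntegrable _ _)]

lemma signPairing_le_sobNorm5 (f : ℝ[X]) : signPairing f ≤ sobNorm5 f := by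
  have hf := f.continuous
  have hf' := f.derivative.continuous
  have h₁ : (∫ x in (-2 : ℝ)..(-1), f.eval x) ≤ ∫ x in (-2 : ℝ)..(-1), |f.eval x| :=
    integral_mono_on (by norm_num) (hf.intervalIntegrable _ _)
      (hf.abs.intervalIntegrable _ _) fun x _ => le_abs_self _
  have h₂ : -(∫ x in (-1 : ℝ)..0, f.eval x) ≤ ∫ x in (-1 : ℝ)..0, |f.eval x| := by
    rw [← intervalIntegral.integral_neg]
    exact integral_mono_on (by norm_num) (hf.neg.intervalIntegrable _ _)
      (hf.abs.intervalIntegrable _ _) fun x _ => neg_le_abs _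
  have h₃ : (∫ x in (0 : ℝ)..1, (derivative f).eval x) ≤
      ∫ x in (0 : ℝ)..1, |(derivative f).eval x| :=
    integral_mono_on (by norm_num) (hf'.intervalIntegrable _ _)
      (hf'.abs.intervalIntegrable _ _) fun x _ => le_abs_self _
  rw [signPairing, sobNorm5_eq_split]
  linarith

lemma sobNorm5_eq_signPairing {f : ℝ[X]} (h₁ : ∀ x ∈ Icc (-2 : ℝ) (-1), 0 ≤ f.eval x)
    (h₂ : ∀ x ∈ Icc (-1 : ℝ) 0, f.eval x ≤ 0)
    (h₃ : ∀ x ∈ Icc (0 : ℝ) 1, 0 ≤ (derivative f).eval x) :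
    sobNorm5 f = signPairing f := by
  have e₁ : ∫ x in (-2 : ℝ)..(-1), |f.eval x| = ∫ x in (-2 : ℝ)..(-1), f.eval x :=
    integral_congr fun x hx => abs_of_nonneg (h₁ x (by rwa [uIcc_of_le (by norm_num)] at hx))
  have e₂ : ∫ x in (-1 : ℝ)..0, |f.eval x| = ∫ x in (-1 : ℝ)..0, -f.eval x :=
    integral_congr fun x hx => abs_of_nonpos (h₂ x (by rwa [uIcc_of_le (by norm_num)] at hx))
  have e₃ : ∫ x in (0 : ℝ)..1, |(derivative f).eval x| =
      ∫ x in (0 : ℝ)..1, (derivative f).eval x :=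
    integral_congr fun x hx => abs_of_nonneg (h₃ x (by rwa [uIcc_of_le (by norm_num)] at hx))
  rw [sobNorm5_eq_split, signPairing, e₁, e₂, e₃, intervalIntegral.integral_neg]
  ring

lemma signPairing_eq_three {Q : ℝ[X]} (hm : Q.Monic) (hd : Q.natDegree = 2) :
    signPairing Q = 3 := by
  rw [signPairing, integral_eval_derivative, hm.eq_X_sq_add_C_mul_X_add_C hd]
  simp only [eval_add, eval_mul, eval_pow, eval_C, eval_X]
  rw [integral_quadratic, integral_quadratic]
  ring

lemma sobNorm5_le_of_signPattern {P : ℝ[X]} (hm : P.Monic) (hd : P.natDegree = 2)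
    (h₁ : ∀ x ∈ Icc (-2 : ℝ) (-1), 0 ≤ P.eval x)
    (h₂ : ∀ x ∈ Icc (-1 : ℝ) 0, P.eval x ≤ 0)
    (h₃ : ∀ x ∈ Icc (0 : ℝ) 1, 0 ≤ (derivative P).eval x)
    {Q : ℝ[X]} (hQm : Q.Monic) (hQd : Q.natDegree = 2) : sobNorm5 P ≤ sobNorm5 Q := by
  rw [sobNorm5_eq_signPairing h₁ h₂ h₃, signPairing_eq_three hm hd,
    ← signPairing_eq_three hQm hQd]
  exact signPairing_le_sobNorm5 Q

section
variable {a : ℝ}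

lemma sign_mul_eqOn_Ioo_neg_two_neg_one (ha : 0 ≤ a) :
    EqOn (fun x => Real.sign ((x + 1) * (x - a))) (fun _ => 1) (Ioo (-2) (-1)) :=
  fun x hx => Real.sign_of_pos (mul_pos_of_neg_of_neg (by linarith [hx.2]) (by linarith [hx.2]))

lemma sign_mul_eqOn_Ioo_neg_one_zero (ha : 0 ≤ a) :
    EqOn (fun x => Real.sign ((x + 1) * (x - a))) (fun _ => -1) (Ioo (-1) 0) :=
  fun x hx => Real.sign_of_neg (mul_neg_of_pos_of_neg (by linarith [hx.1]) (by linarith [hx.2]))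

lemma sign_two_mul_add_eqOn_Ioo_zero_one (ha : a ≤ 1) :
    EqOn (fun x => Real.sign (2 * x + 1 - a)) (fun _ => 1) (Ioo 0 1) :=
  fun x hx => Real.sign_of_pos (by linarith [hx.1])

lemma integral_sign_mul_eq_zero (ha : 0 ≤ a) :
    ∫ x in (-2 : ℝ)..0, Real.sign ((x + 1) * (x - a)) = 0 := by
  rw [integral_eq_add_of_eqOn_Ioo (by norm_num) (by norm_num) continuous_const continuous_const
    (sign_mul_eqOn_Ioo_neg_two_neg_one ha) (sign_mul_eqOn_Ioo_neg_one_zero ha)]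
  norm_num

lemma integral_mul_sign_mul_add_integral_sign_eq_zero (ha₀ : 0 ≤ a) (ha₁ : a ≤ 1) :
    (∫ x in (-2 : ℝ)..0, x * Real.sign ((x + 1) * (x - a))) +
      ∫ x in (0 : ℝ)..1, Real.sign (2 * x + 1 - a) = 0 := by
  rw [integral_eq_add_of_eqOn_Ioo (b := -1) (g := fun x => x) (h := fun x => -x)
      (by norm_num) (by norm_num) continuous_id continuous_neg
      (fun x hx => by simp [sign_mul_eqOn_Ioo_neg_two_neg_one ha₀ hx])
      (fun x hx => by simp [sign_mul_eqOn_Ioo_neg_one_zero ha₀ hx]),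
    integral_congr_Ioo_of_le zero_le_one (sign_two_mul_add_eqOn_Ioo_zero_one ha₁),
    intervalIntegral.integral_neg, integral_id]
  norm_num

lemma monic_X_add_one_mul_X_sub_C (a : ℝ) : ((X + 1) * (X - C a) : ℝ[X]).Monic := by
  monicity!

lemma natDegree_X_add_one_mul_X_sub_C (a : ℝ) : ((X + 1) * (X - C a) : ℝ[X]).natDegree = 2 := by
  compute_degree!

lemma sobNorm5_X_add_one_mul_X_sub_C_le (ha₀ : 0 ≤ a) (ha₁ : a ≤ 1) {Q : ℝ[X]}
    (hQm : Q.Monic) (hQd : Q.natDegree = 2) : sobNorm5 ((X + 1) * (X - C a)) ≤ sobNorm5 Q := by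
  refine sobNorm5_le_of_signPattern (monic_X_add_one_mul_X_sub_C a)
    (natDegree_X_add_one_mul_X_sub_C a) (fun x hx => ?_) (fun x hx => ?_) (fun x hx => ?_) hQm hQd
  · simp only [eval_mul, eval_add, eval_sub, eval_X, eval_one, eval_C]
    exact mul_nonneg_of_nonpos_of_nonpos (by linarith [hx.2]) (by linarith [hx.2])
  · simp only [eval_mul, eval_add, eval_sub, eval_X, eval_one, eval_C]
    exact mul_nonpos_of_nonneg_of_nonpos (by linarith [hx.1]) (by linarith [hx.2])
  · simp only [derivative_mul, derivative_add, derivative_X, derivative_one, derivative_sub,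
      derivative_C, eval_add, eval_mul, eval_sub, eval_X, eval_one, eval_C, eval_zero]
    linarith [hx.1]

end

/-- For every `a ∈ [0,1]` the polynomial `(x+1)(x-a)` satisfies both orthogonality
conditions and is thus minimal of degree 2 for the Sobolev norm
`∫_{-2}^0 |f| + ∫_0^1 |f'|`; in particular the minimal polynomial is not unique. -/
theorem example_continuous_nonuniqueness :
    (∀ a ∈ Set.Icc (0 : ℝ) 1,
      (∫ x in (-2 : ℝ)..0, Real.sign ((x + 1) * (x - a))) = 0 ∧
      ((∫ x in (-2 : ℝ)..0, x * Real.sign ((x + 1) * (x - a))) +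
        ∫ x in (0 : ℝ)..1, Real.sign (2 * x + 1 - a)) = 0 ∧
      ((X + 1) * (X - C a) : Polynomial ℝ).Monic ∧
      ((X + 1) * (X - C a) : Polynomial ℝ).natDegree = 2 ∧
      (∀ Q : Polynomial ℝ, Q.Monic → Q.natDegree = 2 →
        sobNorm5 ((X + 1) * (X - C a)) ≤ sobNorm5 Q)) ∧
    (∃ P₁ P₂ : Polynomial ℝ, P₁ ≠ P₂ ∧
      P₁.Monic ∧ P₁.natDegree = 2 ∧ P₂.Monic ∧ P₂.natDegree = 2 ∧
      (∀ Q : Polynomial ℝ, Q.Monic → Q.natDegree = 2 → sobNorm5 P₁ ≤ sobNorm5 Q) ∧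
      (∀ Q : Polynomial ℝ, Q.Monic → Q.natDegree = 2 → sobNorm5 P₂ ≤ sobNorm5 Q)) := by
  refine ⟨fun a ⟨ha₀, ha₁⟩ => ⟨integral_sign_mul_eq_zero ha₀,
    integral_mul_sign_mul_add_integral_sign_eq_zero ha₀ ha₁, monic_X_add_one_mul_X_sub_C a,
    natDegree_X_add_one_mul_X_sub_C a, fun Q => sobNorm5_X_add_one_mul_X_sub_C_le ha₀ ha₁⟩,
    (X + 1) * (X - C 0), (X + 1) * (X - C 1), fun h => by simpa using congrArg (eval 0) h,
    monic_X_add_one_mul_X_sub_C 0, natDegree_X_add_one_mul_X_sub_C 0,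
    monic_X_add_one_mul_X_sub_C 1, natDegree_X_add_one_mul_X_sub_C 1,
    fun Q => sobNorm5_X_add_one_mul_X_sub_C_le le_rfl zero_le_one,
    fun Q => sobNorm5_X_add_one_mul_X_sub_C_le zero_le_one le_rfl⟩
end

section
/- The polynomial P(x) = x³ is the unique monic polynomial of degree 3 minimizing the norm ‖f‖ = ∫_{−1}^1 |f(x)| dx + |f'(0)|, and ‖x³‖ = 1/2. Moreover P does not satisfy the orthogonality condition: ∫_{−1}^1 x·sgn(x³) dx = 1 ≠ 0. -/
open Polynomial intervalIntegral

/-- The discrete Sobolev 1-norm `‖f‖ = ∫_{-1}^1 |f| dx + |f'(0)|`. -/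
noncomputable def sobNorm6 (f : Polynomial ℝ) : ℝ :=
  (∫ x in (-1 : ℝ)..1, |f.eval x|) + |(derivative f).eval 0|

/-!
Splitting at `0`, every continuous `f` satisfies `∫_{-1}^1 |f| = ∫_0^1 f - ∫_{-1}^0 f + D(f)`,
where the defect `D(f) ≥ 0` vanishes exactly when `f ≤ 0` on `[-1, 0]` and `f ≥ 0` on `[0, 1]`.
For a monic cubic `x³ + ax² + bx + c` the first two terms give `1/2 + b`, so its norm is
`1/2 + D + (|b| + b) ≥ 1/2`. Equality forces the sign pattern of `x³` together with `b ≤ 0`;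
comparing values at `0` and at `±t` for small `t > 0` then gives `c = 0`, `b ≥ 0` and `a = 0`.
-/

open Set

theorem abs_add_self_nonneg {α : Type*} [AddCommGroup α] [LinearOrder α] [IsOrderedAddMonoid α]
    (a : α) : 0 ≤ |a| + a :=
  neg_le_iff_add_nonneg'.1 (neg_abs_le a)

theorem Continuous.nonneg_of_forall_Ioc_nonneg {f : ℝ → ℝ} (hf : Continuous f) {a b : ℝ}
    (hab : a < b) (h : ∀ x ∈ Ioc a b, 0 ≤ f x) : 0 ≤ f a := by
  have hsub : closure (Ioc a b) ⊆ {x | 0 ≤ f x} :=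
    closure_minimal h (isClosed_le continuous_const hf)
  rw [closure_Ioc hab.ne] at hsub
  exact hsub (left_mem_Icc.2 hab.le)

theorem eqOn_zero_of_integral_eq_zero_of_nonneg {f : ℝ → ℝ} {a b : ℝ} (hab : a < b)
    (hf : ContinuousOn f (Icc a b)) (hnn : ∀ x ∈ Icc a b, 0 ≤ f x)
    (h : ∫ x in a..b, f x = 0) : EqOn f 0 (Icc a b) := by
  intro x hx
  by_contra hne
  have hlt := integral_lt_integral_of_continuousOn_of_le_of_exists_lt hab continuousOn_const hf
    (fun y hy => hnn y (Ioc_subset_Icc_self hy)) ⟨x, hx, (hnn x hx).lt_of_ne' hne⟩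
  simp [h] at hlt

theorem integral_abs_sub_self_nonneg {f : ℝ → ℝ} {a b : ℝ} (hab : a ≤ b) :
    0 ≤ ∫ x in a..b, (|f x| - f x) :=
  integral_nonneg hab fun x _ => sub_nonneg.2 (le_abs_self (f x))

theorem integral_abs_add_self_nonneg {f : ℝ → ℝ} {a b : ℝ} (hab : a ≤ b) :
    0 ≤ ∫ x in a..b, (|f x| + f x) :=
  integral_nonneg hab fun x _ => abs_add_self_nonneg (f x)

theorem integral_abs_sub_self_eq_zero_iff {f : ℝ → ℝ} (hf : Continuous f) {a b : ℝ} (hab : a < b) :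
    ∫ x in a..b, (|f x| - f x) = 0 ↔ ∀ x ∈ Icc a b, 0 ≤ f x := by
  constructor
  · intro h x hx
    have := eqOn_zero_of_integral_eq_zero_of_nonneg hab (by fun_prop)
      (fun y _ => sub_nonneg.2 (le_abs_self (f y))) h hx
    exact (abs_nonneg _).trans (sub_eq_zero.1 this).le
  · intro h
    rw [integral_congr (g := fun _ => 0) fun x hx => by
      rw [uIcc_of_le hab.le] at hx; simp [abs_of_nonneg (h x hx)]]
    simp

theorem integral_abs_add_self_eq_zero_iff {f : ℝ → ℝ} (hf : Continuous f) {a b : ℝ} (hab : a < b) :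
    ∫ x in a..b, (|f x| + f x) = 0 ↔ ∀ x ∈ Icc a b, f x ≤ 0 := by
  simpa [sub_neg_eq_add] using integral_abs_sub_self_eq_zero_iff hf.neg hab

noncomputable def signDefect (f : ℝ → ℝ) (a m b : ℝ) : ℝ :=
  (∫ x in a..m, (|f x| + f x)) + ∫ x in m..b, (|f x| - f x)

section signDefect

variable {f : ℝ → ℝ} {a m b : ℝ}

theorem integral_abs_eq_add_signDefect (hf : Continuous f) :
    ∫ x in a..b, |f x| = (∫ x in m..b, f x) - (∫ x in a..m, f x) + signDefect f a m b := by
  have hi : ∀ s t, IntervalIntegrable f MeasureTheory.volume s t :=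
    fun _ _ => hf.intervalIntegrable _ _
  have hai : ∀ s t, IntervalIntegrable (fun x => |f x|) MeasureTheory.volume s t :=
    fun _ _ => hf.abs.intervalIntegrable _ _
  rw [signDefect, integral_add (hai _ _) (hi _ _), integral_sub (hai _ _) (hi _ _),
    ← integral_add_adjacent_intervals (hai a m) (hai m b)]
  ring

theorem signDefect_nonneg (ham : a ≤ m) (hmb : m ≤ b) : 0 ≤ signDefect f a m b :=
  add_nonneg (integral_abs_add_self_nonneg ham) (integral_abs_sub_self_nonneg hmb)

theorem signDefect_eq_zero_iff (hf : Continuous f) (ham : a < m) (hmb : m < b) :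
    signDefect f a m b = 0 ↔ (∀ x ∈ Icc a m, f x ≤ 0) ∧ ∀ x ∈ Icc m b, 0 ≤ f x := by
  rw [signDefect, add_eq_zero_iff_of_nonneg (integral_abs_add_self_nonneg ham.le)
    (integral_abs_sub_self_nonneg hmb.le),
    integral_abs_add_self_eq_zero_iff hf ham, integral_abs_sub_self_eq_zero_iff hf hmb]

end signDefect

noncomputable def monicCubic (a b c : ℝ) : ℝ[X] := X ^ 3 + C a * X ^ 2 + C b * X + C c

theorem Polynomial.Monic.eq_monicCubic {Q : ℝ[X]} (hm : Q.Monic) (hd : Q.natDegree = 3) :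
    Q = monicCubic (Q.coeff 2) (Q.coeff 1) (Q.coeff 0) := by
  have h3 : Q.coeff 3 = 1 := hd ▸ hm.coeff_natDegree
  conv_lhs => rw [Q.as_sum_range_C_mul_X_pow, hd]
  simp only [monicCubic, Finset.sum_range_succ, Finset.sum_range_zero, h3, C_1]
  ring

section monicCubic

variable (a b c : ℝ)

theorem monicCubic_zero : monicCubic 0 0 0 = X ^ 3 := by simp [monicCubic]

theorem eval_monicCubic (x : ℝ) : (monicCubic a b c).eval x = x ^ 3 + a * x ^ 2 + b * x + c := by
  simp [monicCubic]

theorem eval_derivative_monicCubic_zero : (derivative (monicCubic a b c)).eval 0 = b := by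
  simp [monicCubic]

theorem integral_eval_monicCubic (s t : ℝ) :
    ∫ x in s..t, (monicCubic a b c).eval x =
      (t ^ 4 - s ^ 4) / 4 + a * (t ^ 3 - s ^ 3) / 3 + b * (t ^ 2 - s ^ 2) / 2 + c * (t - s) := by
  set F : ℝ[X] := C (1 / 4) * X ^ 4 + C (a / 3) * X ^ 3 + C (b / 2) * X ^ 2 + C c * X
  have hF : derivative F = monicCubic a b c := by
    simp only [F, monicCubic, derivative_add, derivative_C_mul_X_pow, derivative_C_mul_X]
    norm_num
  rw [← hF, integral_eq_sub_of_hasDerivAt (fun x _ => F.hasDerivAt x)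
    (F.derivative.continuous.intervalIntegrable _ _)]
  simp [F]
  ring

theorem sobNorm6_monicCubic :
    sobNorm6 (monicCubic a b c) =
      1 / 2 + (signDefect (fun x => (monicCubic a b c).eval x) (-1) 0 1 + (|b| + b)) := by
  rw [sobNorm6, integral_abs_eq_add_signDefect (m := 0) (monicCubic a b c).continuous,
    integral_eval_monicCubic, integral_eval_monicCubic, eval_derivative_monicCubic_zero]
  ring

theorem half_le_sobNorm6_monicCubic : 1 / 2 ≤ sobNorm6 (monicCubic a b c) := by
  rw [sobNorm6_monicCubic]
  exact le_add_of_nonneg_right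
    (add_nonneg (signDefect_nonneg neg_one_lt_zero.le zero_le_one) (abs_add_self_nonneg b))

theorem sobNorm6_monicCubic_eq_half_iff :
    sobNorm6 (monicCubic a b c) = 1 / 2 ↔
      (∀ x ∈ Icc (-1) 0, (monicCubic a b c).eval x ≤ 0) ∧
        (∀ x ∈ Icc 0 1, 0 ≤ (monicCubic a b c).eval x) ∧ b ≤ 0 := by
  rw [sobNorm6_monicCubic, add_eq_left, add_eq_zero_iff_of_nonneg
    (signDefect_nonneg neg_one_lt_zero.le zero_le_one) (abs_add_self_nonneg b),
    signDefect_eq_zero_iff (monicCubic a b c).continuous neg_one_lt_zero zero_lt_one, and_assoc,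
    add_eq_zero_iff_eq_neg, abs_eq_neg_self]

end monicCubic

theorem monicCubic_eq_X_pow_three_of_sign_pattern {a b c : ℝ}
    (hneg : ∀ x ∈ Icc (-1) 0, (monicCubic a b c).eval x ≤ 0)
    (hpos : ∀ x ∈ Icc 0 1, 0 ≤ (monicCubic a b c).eval x) (hb : b ≤ 0) :
    monicCubic a b c = X ^ 3 := by
  simp only [eval_monicCubic] at hneg hpos
  obtain rfl : c = 0 := le_antisymm (by simpa using hneg 0 ⟨by norm_num, le_rfl⟩)
    (by simpa using hpos 0 ⟨le_rfl, zero_le_one⟩)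
  have hright : ∀ t ∈ Ioc (0 : ℝ) 1, 0 ≤ t ^ 3 + a * t ^ 2 + b * t := fun t ht => by
    simpa using hpos t (Ioc_subset_Icc_self ht)
  have hleft : ∀ t ∈ Ioc (0 : ℝ) 1, 0 ≤ t ^ 3 - a * t ^ 2 + b * t := fun t ht => by
    have := hneg (-t) ⟨by linarith [ht.2], by linarith [ht.1]⟩
    linarith
  -- the odd part of the cubic at `t` is `t (t² + b)`
  have hb_ge : 0 ≤ 0 ^ 2 + b :=
    Continuous.nonneg_of_forall_Ioc_nonneg (f := fun t => t ^ 2 + b) (by fun_prop) zero_lt_one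
      fun t ht => nonneg_of_mul_nonneg_right (a := 2 * t)
        (by linarith [hright t ht, hleft t ht]) (by linarith [ht.1])
  obtain rfl : b = 0 := by linarith
  -- the cubic is now `t² (t + a)`
  have hsq : ∀ t ∈ Ioc (0 : ℝ) 1, 0 < t ^ 2 := fun t ht => pow_pos ht.1 2
  have ha_le : 0 ≤ 0 - a :=
    Continuous.nonneg_of_forall_Ioc_nonneg (f := fun t => t - a) (by fun_prop) zero_lt_one
      fun t ht => nonneg_of_mul_nonneg_right (hleft t ht |>.trans_eq (by ring)) (hsq t ht)
  have ha_ge : 0 ≤ 0 + a :=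
    Continuous.nonneg_of_forall_Ioc_nonneg (f := fun t => t + a) (by fun_prop) zero_lt_one
      fun t ht => nonneg_of_mul_nonneg_right (hright t ht |>.trans_eq (by ring)) (hsq t ht)
  obtain rfl : a = 0 := by linarith
  exact monicCubic_zero

theorem mul_sign_pow_three (x : ℝ) : x * Real.sign (x ^ 3) = |x| := by
  rcases lt_trichotomy x 0 with hx | rfl | hx
  · rw [Real.sign_of_neg (Odd.pow_neg (by decide) hx), abs_of_neg hx, mul_neg_one]
  · simp
  · rw [Real.sign_of_pos (pow_pos hx 3), abs_of_pos hx, mul_one]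

theorem integral_mul_sign_pow_three : ∫ x in (-1 : ℝ)..1, x * Real.sign (x ^ 3) = 1 := by
  have hdefect : signDefect (fun x => x) (-1) 0 1 = 0 :=
    (signDefect_eq_zero_iff continuous_id' neg_one_lt_zero zero_lt_one).2
      ⟨fun x hx => hx.2, fun x hx => hx.1⟩
  simp only [mul_sign_pow_three]
  rw [integral_abs_eq_add_signDefect (f := fun x => x) (m := 0) continuous_id', hdefect]
  norm_num [integral_id]

theorem sobNorm6_X_pow_three : sobNorm6 (X ^ 3 : ℝ[X]) = 1 / 2 := by
  rw [← monicCubic_zero, sobNorm6_monicCubic_eq_half_iff]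
  refine ⟨fun x hx => ?_, fun x hx => ?_, le_rfl⟩ <;> simp only [eval_monicCubic]
  · linarith [Odd.pow_nonpos (n := 3) (by decide) hx.2]
  · linarith [pow_nonneg hx.1 3]

/-- `x³` is the unique monic cubic minimizing `∫_{-1}^1 |f| + |f'(0)|`, its norm is
`1/2`, and it does not satisfy the orthogonality condition since
`∫_{-1}^1 x sgn(x³) dx = 1 ≠ 0`. -/
theorem example_unique_minimal_no_orthogonality :
    sobNorm6 (X ^ 3 : Polynomial ℝ) = 1 / 2 ∧
    (∀ Q : Polynomial ℝ, Q.Monic → Q.natDegree = 3 →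
      sobNorm6 (X ^ 3 : Polynomial ℝ) ≤ sobNorm6 Q) ∧
    (∀ Q : Polynomial ℝ, Q.Monic → Q.natDegree = 3 →
      sobNorm6 Q = sobNorm6 (X ^ 3 : Polynomial ℝ) → Q = X ^ 3) ∧
    (∫ x in (-1 : ℝ)..1, x * Real.sign (x ^ 3)) = 1 ∧ (1 : ℝ) ≠ 0 := by
  refine ⟨sobNorm6_X_pow_three, fun Q hm hd => ?_, fun Q hm hd heq => ?_,
    integral_mul_sign_pow_three, one_ne_zero⟩
  · rw [sobNorm6_X_pow_three, hm.eq_monicCubic hd]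
    exact half_le_sobNorm6_monicCubic _ _ _
  · rw [sobNorm6_X_pow_three, hm.eq_monicCubic hd, sobNorm6_monicCubic_eq_half_iff] at heq
    obtain ⟨hneg, hpos, hb⟩ := heq
    rw [hm.eq_monicCubic hd]
    exact monicCubic_eq_X_pow_three_of_sign_pattern hneg hpos hb
end

section
/- Necessity of the orthogonality condition for continuous measures, p = 1: if μ_0,…,μ_m are positive finite Borel measures on ℝ each of which gives zero mass to every singleton, and P_n is a monic polynomial of degree n minimizing ‖f‖ = Σ_{k=0}^m ∫ |f^{(k)}| dμ_k among monic polynomials of degree n, then Σ_{k=0}^m ∫ q^{(k)} sgn(P_n^{(k)}) dμ_k = 0 for every polynomial q of degree at most n−1. -/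
/-!
Perturb the minimizer within the monic polynomials of degree `n`: `t ↦ ‖P + t q‖` is minimal at
`t = 0`. It is differentiable there, with derivative `∑ₖ ∫ q⁽ᵏ⁾ sgn P⁽ᵏ⁾ dμₖ`: the absolute value
is differentiable off its kink and Lipschitz, so one may differentiate under the integral as long
as `q⁽ᵏ⁾` vanishes almost everywhere on the zero set of `P⁽ᵏ⁾`. That zero set is finite, hence
`μₖ`-null because `μₖ` has no atoms, unless `P⁽ᵏ⁾ = 0`, and then `q⁽ᵏ⁾ = 0` too as `deg q < deg P`.
Fermat's rule gives the orthogonality relation.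
-/

open Polynomial MeasureTheory Filter

def measSupport (μ : Measure ℝ) : Set ℝ :=
  {x : ℝ | ∀ U : Set ℝ, IsOpen U → x ∈ U → μ U ≠ 0}

theorem Real.measurable_sign_s9 : Measurable Real.sign :=
  Measurable.ite measurableSet_Iio measurable_const
    (Measurable.ite measurableSet_Ioi measurable_const measurable_const)

theorem hasDerivAt_abs_add_mul {a b : ℝ} (hab : a = 0 → b = 0) :
    HasDerivAt (fun t => |a + t * b|) (b * Real.sign a) 0 := by
  have hlin : HasDerivAt (fun t => a + t * b) b 0 := by
    simpa using ((hasDerivAt_id (0 : ℝ)).mul_const b).const_add a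
  rcases lt_trichotomy a 0 with ha | rfl | ha
  · have := (hasDerivAt_abs_neg (by simpa using ha)).comp (0 : ℝ) hlin
    simpa [Function.comp_def, Real.sign_of_neg ha] using this
  · simpa [hab rfl] using hasDerivAt_const (0 : ℝ) (0 : ℝ)
  · have := (hasDerivAt_abs_pos (by simpa using ha)).comp (0 : ℝ) hlin
    simpa [Function.comp_def, Real.sign_of_pos ha] using this

theorem lipschitzWith_abs_add_mul (a b : ℝ) :
    LipschitzWith (Real.nnabs b) (fun t => |a + t * b|) :=
  LipschitzWith.of_dist_le_mul fun s t => by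
    simpa [Real.dist_eq, ← mul_sub, abs_mul, mul_comm] using
      abs_abs_sub_abs_le_abs_sub (a + s * b) (a + t * b)

theorem hasDerivAt_integral_abs_add_mul {α : Type*} [MeasurableSpace α] {μ : Measure α}
    {f g : α → ℝ} (hf : Integrable f μ) (hg : Integrable g μ)
    (hfg : ∀ᵐ x ∂μ, f x = 0 → g x = 0) :
    HasDerivAt (fun t => ∫ x, |f x + t * g x| ∂μ) (∫ x, g x * Real.sign (f x) ∂μ) 0 :=
  (hasDerivAt_integral_of_dominated_loc_of_lip (F := fun t x => |f x + t * g x|)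
    (F' := fun x => g x * Real.sign (f x)) (bound := g) univ_mem
    (Eventually.of_forall fun t => (hf.add (hg.const_mul t)).abs.aestronglyMeasurable)
    (by simpa using hf.abs)
    (hg.aestronglyMeasurable.mul
      (Real.measurable_sign_s9.comp_aemeasurable hf.aemeasurable).aestronglyMeasurable)
    (Eventually.of_forall fun x => (lipschitzWith_abs_add_mul _ _).lipschitzOnWith)
    hg (hfg.mono fun _ => hasDerivAt_abs_add_mul)).2

namespace Polynomial

section CharZero

variable {R : Type*} [Semiring R] [NoZeroDivisors R] [CharZero R]

theorem iterate_derivative_ne_zero_of_le_natDegree {p : R[X]} (hp : p ≠ 0) {k : ℕ}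
    (hk : k ≤ p.natDegree) : derivative^[k] p ≠ 0 := by
  intro h
  have hcoeff := coeff_iterate_derivative (k := k) p (p.natDegree - k)
  rw [h, Nat.sub_add_cancel hk, coeff_zero, nsmul_eq_mul, eq_comm, mul_eq_zero,
    Nat.cast_eq_zero, Nat.descFactorial_eq_zero_iff_lt] at hcoeff
  exact hcoeff.elim (absurd hk ·.not_ge) (leadingCoeff_ne_zero.mpr hp)

theorem iterate_derivative_eq_zero_of_degree_lt_of_iterate_derivative_eq_zero {p q : R[X]}
    (hqp : q.degree < p.degree) {k : ℕ} (hp : derivative^[k] p = 0) :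
    derivative^[k] q = 0 := by
  have hp0 : p ≠ 0 := by rintro rfl; simp at hqp
  have hpk : p.natDegree < k :=
    not_le.mp fun hk => iterate_derivative_ne_zero_of_le_natDegree hp0 hk hp
  rcases eq_or_ne q 0 with rfl | hq0
  · simp
  · exact iterate_derivative_eq_zero ((natDegree_lt_natDegree hq0 hqp).trans hpk)

end CharZero

variable {μ : Measure ℝ} [NullSingletonClass μ]

theorem ae_eval_ne_zero {p : ℝ[X]} (hp : p ≠ 0) : ∀ᵐ x ∂μ, p.eval x ≠ 0 :=
  measure_mono_null (fun x hx => by simpa using hx) ((finite_setOfPred_isRoot hp).measure_zero μ)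

theorem ae_eval_iterate_derivative_eq_zero_imp {p q : ℝ[X]} (hqp : q.degree < p.degree) (k : ℕ) :
    ∀ᵐ x ∂μ, (derivative^[k] p).eval x = 0 → (derivative^[k] q).eval x = 0 := by
  by_cases hpk : derivative^[k] p = 0
  · simp [iterate_derivative_eq_zero_of_degree_lt_of_iterate_derivative_eq_zero hqp hpk]
  · exact (ae_eval_ne_zero hpk).mono fun x hx h => absurd h hx

end Polynomial

noncomputable def sobolevL1Norm {m : ℕ} (μ : Fin (m + 1) → Measure ℝ) (Q : ℝ[X]) : ℝ :=
  ∑ k : Fin (m + 1), ∫ x, |(derivative^[(k : ℕ)] Q).eval x| ∂μ k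

theorem hasDerivAt_sobolevL1Norm_add_smul {m : ℕ} {μ : Fin (m + 1) → Measure ℝ}
    [∀ k, NullSingletonClass (μ k)]
    (hint : ∀ k (q : ℝ[X]), Integrable (fun x => q.eval x) (μ k))
    {P q : ℝ[X]} (hqP : q.degree < P.degree) :
    HasDerivAt (fun t : ℝ => sobolevL1Norm μ (P + t • q))
      (∑ k : Fin (m + 1), ∫ x, (derivative^[(k : ℕ)] q).eval x *
        Real.sign ((derivative^[(k : ℕ)] P).eval x) ∂μ k) 0 := by
  have := HasDerivAt.fun_sum (u := Finset.univ) fun k _ =>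
    hasDerivAt_integral_abs_add_mul (hint k _) (hint k _)
      (ae_eval_iterate_derivative_eq_zero_imp (μ := μ k) hqP k)
  simpa [sobolevL1Norm, iterate_derivative_smul] using this

theorem sobolev_L1_necessary_condition_continuous_general
    (m n : ℕ) (μ : Fin (m + 1) → Measure ℝ)
    (hcont : ∀ (k : Fin (m + 1)) (x : ℝ), μ k {x} = 0)
    (hint : ∀ (k : Fin (m + 1)) (q : Polynomial ℝ),
      Integrable (fun x => q.eval x) (μ k))
    (P : Polynomial ℝ) (hPm : P.Monic) (hPd : P.natDegree = n)
    (hmin : ∀ Q : Polynomial ℝ, Q.Monic → Q.natDegree = n →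
      ∑ k : Fin (m + 1), ∫ x : ℝ, |(derivative^[(k : ℕ)] P).eval x| ∂ μ k ≤
      ∑ k : Fin (m + 1), ∫ x : ℝ, |(derivative^[(k : ℕ)] Q).eval x| ∂ μ k) :
    ∀ q : Polynomial ℝ, q.degree < n →
      ∑ k : Fin (m + 1),
        ∫ x : ℝ, (derivative^[(k : ℕ)] q).eval x *
          Real.sign ((derivative^[(k : ℕ)] P).eval x) ∂ μ k = 0 := by
  intro q hq
  have _ : ∀ k, NullSingletonClass (μ k) := fun k => ⟨hcont k⟩
  have hqP : q.degree < P.degree := by rwa [degree_eq_natDegree hPm.ne_zero, hPd]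
  have hPmin : IsLocalMin (fun t : ℝ => sobolevL1Norm μ (P + t • q)) 0 :=
    Eventually.of_forall fun t => by
      have htq : (t • q).degree < P.degree := (degree_smul_le t q).trans_lt hqP
      simpa [sobolevL1Norm] using hmin _ (hPm.add_of_left htq)
        (by rw [natDegree_add_eq_left_of_degree_lt htq, hPd])
  exact hPmin.hasDerivAt_eq_zero (hasDerivAt_sobolevL1Norm_add_smul hint hqP)

/-- Necessity of the orthogonality condition for continuous measures, `p = 1`: a
minimal monic polynomial for the Sobolev `1`-norm with atomless measures satisfies
the sign orthogonality condition against all lower-degree polynomials. -/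
theorem sobolev_L1_necessary_condition_continuous
    (m n : ℕ) (μ : Fin (m + 1) → Measure ℝ)
    (hfin : ∀ k, IsFiniteMeasure (μ k))
    (hcont : ∀ (k : Fin (m + 1)) (x : ℝ), μ k {x} = 0)
    (hint : ∀ (k : Fin (m + 1)) (q : Polynomial ℝ),
      Integrable (fun x => q.eval x) (μ k))
    (hinf : (convexHull ℝ (measSupport (μ 0))).Infinite)
    (P : Polynomial ℝ) (hPm : P.Monic) (hPd : P.natDegree = n)
    (hmin : ∀ Q : Polynomial ℝ, Q.Monic → Q.natDegree = n →
      ∑ k : Fin (m + 1), ∫ x : ℝ, |(derivative^[(k : ℕ)] P).eval x| ∂ μ k ≤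
      ∑ k : Fin (m + 1), ∫ x : ℝ, |(derivative^[(k : ℕ)] Q).eval x| ∂ μ k) :
    ∀ q : Polynomial ℝ, q.degree < n →
      ∑ k : Fin (m + 1),
        ∫ x : ℝ, (derivative^[(k : ℕ)] q).eval x *
          Real.sign ((derivative^[(k : ℕ)] P).eval x) ∂ μ k = 0 :=
  sobolev_L1_necessary_condition_continuous_general m n μ hcont hint P hPm hPd hmin
end

section
/- If a discrete Sobolev p-norm is equivalent to a norm for which the multiplication operator is bounded with constant C₃, with equivalence constants C₁‖q‖* ≤ ‖q‖ ≤ C₂‖q‖*, then every zero z₀ of every minimal monic polynomial P_n (with respect to ‖·‖) satisfies |z₀| ≤ 2C₂C₃/C₁. -/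
open Polynomial

/-!
Factor `P = (X - z₀) q` with `q` monic. Then `X q` is a monic competitor of degree `n`, so
minimality gives `‖P‖ ≤ ‖X q‖`, and `z₀ q = X q - P` yields `|z₀| ‖q‖ ≤ 2 ‖X q‖`. Passing to
`‖·‖*`, where multiplication by `X` costs at most `C₃`, gives `|z₀| C₁ ‖q‖* ≤ 2 C₂ C₃ ‖q‖*`.
-/

namespace Polynomial

variable {R : Type*} [CommRing R]

theorem Monic.exists_monic_eq_X_sub_C_mul {P : R[X]} (hP : P.Monic) {a : R} (ha : P.IsRoot a) :
    ∃ q : R[X], q.Monic ∧ P = (X - C a) * q := by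
  have hfactor := mul_divByMonic_eq_iff_isRoot.2 ha
  exact ⟨P /ₘ (X - C a), (monic_X_sub_C a).of_mul_monic_left (by rwa [hfactor]), hfactor.symm⟩

theorem Monic.natDegree_X_mul_eq_natDegree_X_sub_C_mul [Nontrivial R] {q : R[X]} (hq : q.Monic)
    (a : R) : (X * q).natDegree = ((X - C a) * q).natDegree := by
  rw [monic_X.natDegree_mul hq, (monic_X_sub_C a).natDegree_mul hq, natDegree_X,
    natDegree_X_sub_C]

end Polynomial

theorem Seminorm.norm_mul_le_two_mul_X_mul {𝕜 : Type*} [NormedField 𝕜] (p : Seminorm 𝕜 𝕜[X])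
    {a : 𝕜} {q : 𝕜[X]} (h : p ((X - C a) * q) ≤ p (X * q)) : ‖a‖ * p q ≤ 2 * p (X * q) := by
  have hsmul : a • q = X * q - (X - C a) * q := by rw [smul_eq_C_mul]; ring
  calc ‖a‖ * p q = p (X * q - (X - C a) * q) := by rw [← map_smul_eq_mul, hsmul]
    _ ≤ p (X * q) + p ((X - C a) * q) := map_sub_le_add p _ _
    _ ≤ 2 * p (X * q) := by linarith

theorem zeros_bounded_of_equivalent_norm_with_bounded_multiplication_general
    (Nn Ns : Polynomial ℂ → ℝ)
    (hNadd : ∀ f g, Nn (f + g) ≤ Nn f + Nn g)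
    (hNsmul : ∀ (z : ℂ) f, Nn (z • f) = ‖z‖ * Nn f)
    (hNpos : ∀ f, f ≠ 0 → 0 < Nn f)
    (C₁ C₂ C₃ : ℝ) (hC₁ : 0 < C₁) (hC₂ : 0 < C₂)
    (hequiv : ∀ q : Polynomial ℂ, C₁ * Ns q ≤ Nn q ∧ Nn q ≤ C₂ * Ns q)
    (hmult : ∀ q : Polynomial ℂ, Ns (X * q) ≤ C₃ * Ns q)
    (n : ℕ) (P : Polynomial ℂ) (hPm : P.Monic) (hPd : P.natDegree = n)
    (hmin : ∀ Q : Polynomial ℂ, Q.Monic → Q.natDegree = n → Nn P ≤ Nn Q)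
    (z₀ : ℂ) (hz₀ : P.eval z₀ = 0) :
    ‖z₀‖ ≤ 2 * C₂ * C₃ / C₁ := by
  obtain ⟨q, hqm, rfl⟩ := hPm.exists_monic_eq_X_sub_C_mul hz₀
  have hPXq : Nn ((X - C z₀) * q) ≤ Nn (X * q) :=
    hmin _ (monic_X.mul hqm) (by rw [hqm.natDegree_X_mul_eq_natDegree_X_sub_C_mul z₀, hPd])
  have key : ‖z₀‖ * Nn q ≤ 2 * Nn (X * q) :=
    (Seminorm.of Nn hNadd hNsmul).norm_mul_le_two_mul_X_mul hPXq
  have hNsq : 0 < Ns q :=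
    pos_of_mul_pos_right ((hNpos q hqm.ne_zero).trans_le (hequiv q).2) hC₂.le
  have hbound : ‖z₀‖ * C₁ * Ns q ≤ 2 * C₂ * C₃ * Ns q :=
    calc ‖z₀‖ * C₁ * Ns q ≤ ‖z₀‖ * Nn q := by
          rw [mul_assoc]; exact mul_le_mul_of_nonneg_left (hequiv q).1 (norm_nonneg _)
      _ ≤ 2 * Nn (X * q) := key
      _ ≤ 2 * (C₂ * Ns (X * q)) := by linarith [(hequiv (X * q)).2]
      _ ≤ 2 * C₂ * C₃ * Ns q := by nlinarith [hmult q]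
  rw [le_div_iff₀ hC₁]
  exact le_of_mul_le_mul_right hbound hNsq

/-- Zeros of minimal polynomials are uniformly bounded when the norm is equivalent
to one for which the multiplication operator is bounded: every zero `z₀` of a
minimal monic polynomial satisfies `|z₀| ≤ 2 C₂ C₃ / C₁`. -/
theorem zeros_bounded_of_equivalent_norm_with_bounded_multiplication
    (Nn Ns : Polynomial ℂ → ℝ)
    (hNadd : ∀ f g, Nn (f + g) ≤ Nn f + Nn g)
    (hNsmul : ∀ (z : ℂ) f, Nn (z • f) = ‖z‖ * Nn f)
    (hNpos : ∀ f, f ≠ 0 → 0 < Nn f)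
    (C₁ C₂ C₃ : ℝ) (hC₁ : 0 < C₁) (hC₂ : 0 < C₂) (hC₃ : 0 < C₃)
    (hequiv : ∀ q : Polynomial ℂ, C₁ * Ns q ≤ Nn q ∧ Nn q ≤ C₂ * Ns q)
    (hmult : ∀ q : Polynomial ℂ, Ns (X * q) ≤ C₃ * Ns q)
    (n : ℕ) (P : Polynomial ℂ) (hPm : P.Monic) (hPd : P.natDegree = n)
    (hmin : ∀ Q : Polynomial ℂ, Q.Monic → Q.natDegree = n → Nn P ≤ Nn Q)
    (z₀ : ℂ) (hz₀ : P.eval z₀ = 0) :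
    ‖z₀‖ ≤ 2 * C₂ * C₃ / C₁ :=
  zeros_bounded_of_equivalent_norm_with_bounded_multiplication_general Nn Ns hNadd hNsmul hNpos C₁
    C₂ C₃ hC₁ hC₂ hequiv hmult n P hPm hPd hmin z₀ hz₀
end

section
/- Generalized Rolle inequality for sequentially-ordered families of intervals: let I₀,…,I_m be real intervals with I_k disjoint from the interior of the convex hull of I₀ ∪ ⋯ ∪ I_{k−1} for k = 1,…,m, and let Q be a real polynomial of degree ≥ m. Then for every closed subinterval J of the interior of I₀: N₀(Q;J) + N(Q; I₀ \ J) + Σ_{i=1}^m N(Q^{(i)}; I_i) ≤ N₀(Q^{(m)}; J) + N(Q^{(m)}; ch(∪_{i=0}^m I_i) \ J) + m, where N₀(f;A) counts zeros of f in A with multiplicity and N(f;A) counts distinct zeros of f in A. -/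
/-!
Rolle's theorem, localized: between two consecutive zeros of `Q` in `A` lies a zero of `Q'` in
the interior of the convex hull of `A`, and a zero of `Q` of multiplicity `r` is a zero of `Q'`
of multiplicity at least `r - 1`. This trades the zeros of `Q` on `A` for those of `Q'` on
`interior (ch A)` at the cost of `1`. Iterating, the `k`-th step passes from
`ch (I₀ ∪ ⋯ ∪ I_{k-1})` to `ch (I₀ ∪ ⋯ ∪ I_k)`; since `I_k` misses the interior of the former
hull, the zeros of `Q^{(k)}` on `I_k` come on top of those on that interior.
-/

open Polynomial

open scoped Classical in
/-- `N₀(Q;A)`: number of zeros of `Q` in `A` counted with multiplicity. -/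
noncomputable def nZerosMult (Q : Polynomial ℝ) (A : Set ℝ) : ℕ :=
  (Q.roots.filter (fun x => x ∈ A)).card

open scoped Classical in
/-- `N(Q;A)`: number of distinct zeros of `Q` in `A`. -/
noncomputable def nZeros (Q : Polynomial ℝ) (A : Set ℝ) : ℕ :=
  (Q.roots.toFinset.filter (fun x => x ∈ A)).card

theorem Multiset.sum_count_le_card {α : Type*} [DecidableEq α] (s : Finset α) (m : Multiset α) :
    ∑ a ∈ s, m.count a ≤ Multiset.card m :=
  (Finset.sum_le_sum_of_subset Finset.subset_union_left).trans <|
    (Multiset.sum_count_eq_card fun _ ha =>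
      Finset.mem_union_right _ (Multiset.mem_toFinset.2 ha)).le

section ZeroCounts

open scoped Classical

theorem nZeros_mono (Q : ℝ[X]) {A B : Set ℝ} (h : A ⊆ B) : nZeros Q A ≤ nZeros Q B :=
  Finset.card_le_card (Finset.monotone_filter_right _ fun _ _ hx => h hx)

theorem nZeros_inter_add_diff (Q : ℝ[X]) (A B : Set ℝ) :
    nZeros Q (A ∩ B) + nZeros Q (A \ B) = nZeros Q A := by
  simp only [nZeros, Set.mem_inter_iff, Set.mem_sdiff, ← Finset.filter_filter]
  exact Finset.card_filter_add_card_filter_not _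

theorem nZeros_union_of_disjoint (Q : ℝ[X]) {A B : Set ℝ} (h : Disjoint A B) :
    nZeros Q (A ∪ B) = nZeros Q A + nZeros Q B := by
  rw [← nZeros_inter_add_diff Q (A ∪ B) A, Set.union_inter_cancel_left,
    Set.union_sdiff_cancel_left h.le_bot]

theorem nZerosMult_inter_add_diff (Q : ℝ[X]) (A B : Set ℝ) :
    nZerosMult Q (A ∩ B) + nZerosMult Q (A \ B) = nZerosMult Q A := by
  rw [nZerosMult, nZerosMult, nZerosMult, ← Multiset.card_add,
    ← Multiset.filter_add_not (· ∈ B) (Q.roots.filter (· ∈ A)),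
    Multiset.filter_filter, Multiset.filter_filter]
  simp only [Set.mem_inter_iff, Set.mem_sdiff, and_comm]

theorem nZeros_le_nZerosMult (Q : ℝ[X]) (A : Set ℝ) : nZeros Q A ≤ nZerosMult Q A := by
  rw [nZeros, nZerosMult, ← Multiset.toFinset_filter]
  exact Multiset.toFinset_card_le _

theorem nZerosMult_le_nZeros_add_nZerosMult_derivative (Q : ℝ[X]) (A : Set ℝ) :
    nZerosMult Q A ≤ nZeros Q A + nZerosMult (derivative Q) (A ∩ {x | x ∈ Q.roots}) := by
  set F := Q.roots.toFinset.filter (· ∈ A)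
  have hF : ∀ x ∈ F, x ∈ A ∩ {x | x ∈ Q.roots} := fun x hx => by
    simp only [F, Finset.mem_filter, Multiset.mem_toFinset] at hx
    exact ⟨hx.2, hx.1⟩
  calc nZerosMult Q A = ∑ x ∈ F, Q.roots.count x := by
        rw [nZerosMult, ← Multiset.sum_count_eq_card (s := F) fun x hx => by simpa [F] using hx]
        exact Finset.sum_congr rfl fun x hx => Multiset.count_filter_of_pos (hF x hx).1
    _ ≤ ∑ x ∈ F, (1 + (derivative Q).roots.count x) := Finset.sum_le_sum fun x _ => by
        have := rootMultiplicity_sub_one_le_derivative_rootMultiplicity Q x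
        rw [count_roots, count_roots]
        omega
    _ = nZeros Q A + ∑ x ∈ F, (derivative Q).roots.count x := by
        rw [Finset.sum_add_distrib, ← Finset.card_eq_sum_ones, nZeros]
    _ ≤ nZeros Q A + nZerosMult (derivative Q) (A ∩ {x | x ∈ Q.roots}) := by
        refine Nat.add_le_add_left ?_ _
        unfold nZerosMult
        refine le_trans (le_of_eq (Finset.sum_congr rfl fun x hx => ?_))
          (Multiset.sum_count_le_card F _)
        simp only [Multiset.count_filter, if_pos (hF x hx)]

theorem nZeros_le_nZeros_derivative_add_one (Q : ℝ[X]) (A : Set ℝ) :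
    nZeros Q A ≤
      nZeros (derivative Q) (interior (convexHull ℝ A) \ (A ∩ {x | x ∈ Q.roots})) + 1 := by
  rcases eq_or_ne (derivative Q) 0 with hQ' | hQ'
  · rw [eq_C_of_derivative_eq_zero hQ']
    simp [nZeros]
  have hQ : Q ≠ 0 := ne_of_apply_ne derivative (by rwa [derivative_zero])
  set s := Q.roots.toFinset.filter (· ∈ A)
  set t := (derivative Q).roots.toFinset.filter (· ∈ interior (convexHull ℝ A))
  have interleaved : s.card ≤ (t \ s).card + 1 := by
    refine Finset.card_le_sdiff_of_interleaved fun x hx y hy hxy _ => ?_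
    simp only [s, Finset.mem_filter, Multiset.mem_toFinset, mem_roots hQ] at hx hy
    obtain ⟨z, hz, hz'⟩ := exists_deriv_eq_zero hxy Q.continuousOn (hx.1.trans hy.1.symm)
    have hIoo : Set.Ioo x y ⊆ convexHull ℝ A :=
      Set.Ioo_subset_Icc_self.trans <| (convex_convexHull ℝ A).ordConnected.out
        (subset_convexHull ℝ A hx.2) (subset_convexHull ℝ A hy.2)
    refine ⟨z, Finset.mem_filter.2 ⟨?_, interior_maximal hIoo isOpen_Ioo hz⟩, hz⟩
    rwa [Multiset.mem_toFinset, mem_roots hQ', IsRoot, ← Q.deriv]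
  refine interleaved.trans (Nat.add_le_add_right (Finset.card_le_card fun x hx => ?_) 1)
  simp only [s, t, Finset.mem_sdiff, Finset.mem_filter, Multiset.mem_toFinset] at hx ⊢
  exact ⟨hx.1.1, hx.1.2, fun h => hx.2 ⟨h.2, h.1⟩⟩

theorem nZerosMult_add_nZeros_diff_le (Q : ℝ[X]) {A J : Set ℝ} (hJA : J ⊆ A) :
    nZerosMult Q J + nZeros Q (A \ J) ≤
      nZerosMult (derivative Q) J +
        nZeros (derivative Q) (interior (convexHull ℝ A) \ J) + 1 := by
  have hmultQ := nZerosMult_le_nZeros_add_nZerosMult_derivative Q J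
  have hrolle := nZeros_le_nZeros_derivative_add_one Q A
  set Z := {x | x ∈ Q.roots}
  set U := interior (convexHull ℝ A)
  have hzeros : nZeros Q J + nZeros Q (A \ J) = nZeros Q A := by
    rw [← nZeros_inter_add_diff Q A J, Set.inter_eq_right.2 hJA]
  have hnew : nZeros (derivative Q) (U \ (A ∩ Z)) ≤
      nZerosMult (derivative Q) (J \ Z) + nZeros (derivative Q) (U \ J) := by
    rw [← nZeros_inter_add_diff _ (U \ (A ∩ Z)) J]
    have hJZ : (U \ (A ∩ Z)) ∩ J ⊆ J \ Z := fun x hx =>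
      ⟨hx.2, fun hZ => hx.1.2 ⟨hJA hx.2, hZ⟩⟩
    exact Nat.add_le_add ((nZeros_mono _ hJZ).trans (nZeros_le_nZerosMult _ _))
      (nZeros_mono _ (Set.sdiff_subset_sdiff_left Set.sdiff_subset))
  have hmult := nZerosMult_inter_add_diff (derivative Q) J Z
  omega

theorem nZeros_interior_convexHull_diff_add_le (Q : ℝ[X]) {S T J : Set ℝ}
    (hT : T ∩ interior (convexHull ℝ S) = ∅) (hJ : J ⊆ interior (convexHull ℝ S)) :
    nZeros Q (interior (convexHull ℝ S) \ J) + nZeros Q T ≤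
      nZeros Q (convexHull ℝ (S ∪ T) \ J) := by
  have hT' : ∀ x ∈ T, x ∉ interior (convexHull ℝ S) := fun x hx hxS =>
    (Set.eq_empty_iff_forall_notMem.1 hT) x ⟨hx, hxS⟩
  have hdisj : Disjoint (interior (convexHull ℝ S) \ J) T :=
    Set.disjoint_right.2 fun x hx hxS => hT' x hx hxS.1
  rw [← nZeros_union_of_disjoint Q hdisj]
  refine nZeros_mono Q (Set.union_subset ?_ fun x hx => ⟨?_, fun hxJ => ?_⟩)
  · exact Set.sdiff_subset_sdiff_left <|
      interior_subset.trans (convexHull_mono Set.subset_union_left)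
  · exact subset_convexHull ℝ _ (Set.mem_union_right S hx)
  · exact hT' x hx (hJ hxJ)

end ZeroCounts

theorem generalized_rolle_inequality_general
    (m : ℕ) (I : ℕ → Set ℝ)
    (horder : ∀ k, 1 ≤ k → k ≤ m →
      I k ∩ interior (convexHull ℝ (⋃ i < k, I i)) = ∅)
    (Q : Polynomial ℝ)
    (J : Set ℝ)
    (hJ : J ⊆ interior (I 0)) :
    nZerosMult Q J + nZeros Q (I 0 \ J) +
      ∑ i ∈ Finset.Icc 1 m, nZeros (derivative^[i] Q) (I i) ≤
    nZerosMult (derivative^[m] Q) J +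
      nZeros (derivative^[m] Q)
        (convexHull ℝ (⋃ i ∈ Finset.range (m + 1), I i) \ J) + m := by
  induction m with
  | zero => simpa using nZeros_mono Q (Set.sdiff_subset_sdiff_left (subset_convexHull ℝ (I 0)))
  | succ m ih =>
    specialize ih fun k hk hkm => horder k hk (by omega)
    rw [Finset.range_add_one, Finset.set_biUnion_insert, Set.union_comm,
      Finset.sum_Icc_succ_top (by omega)]
    set S := ⋃ i ∈ Finset.range (m + 1), I i
    have hJS : J ⊆ interior (convexHull ℝ S) :=
      hJ.trans <| interior_mono <|
        (Set.subset_biUnion_of_mem (by simp)).trans (subset_convexHull ℝ S)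
    have hstep := nZerosMult_add_nZeros_diff_le (derivative^[m] Q) (hJS.trans interior_subset)
    rw [(convex_convexHull ℝ S).convexHull_eq] at hstep
    have hnext := nZeros_interior_convexHull_diff_add_le (derivative^[m + 1] Q)
      (by simpa [S, Finset.mem_range] using horder (m + 1) le_add_self le_rfl) hJS
    rw [Function.iterate_succ_apply'] at hnext ⊢
    omega

/-- Generalized Rolle inequality for sequentially-ordered families of intervals. -/
theorem generalized_rolle_inequality
    (m : ℕ) (I : ℕ → Set ℝ) (hI : ∀ k ≤ m, (I k).OrdConnected)
    (horder : ∀ k, 1 ≤ k → k ≤ m →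
      I k ∩ interior (convexHull ℝ (⋃ i < k, I i)) = ∅)
    (Q : Polynomial ℝ) (hQ : Q ≠ 0) (hdeg : m ≤ Q.natDegree)
    (J : Set ℝ) (hJc : IsClosed J) (hJi : J.OrdConnected)
    (hJ : J ⊆ interior (I 0)) :
    nZerosMult Q J + nZeros Q (I 0 \ J) +
      ∑ i ∈ Finset.Icc 1 m, nZeros (derivative^[i] Q) (I i) ≤
    nZerosMult (derivative^[m] Q) J +
      nZeros (derivative^[m] Q)
        (convexHull ℝ (⋃ i ∈ Finset.range (m + 1), I i) \ J) + m :=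
  generalized_rolle_inequality_general m I horder Q J hJ
end
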